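/- Asymptotics of Ψ along the line √2 t. Let g : [0,∞) → [0,∞) be measurable with C_r := √(2/π) ∫_0^∞ g(y) y e^{√2 y} dy < ∞. Fix r > 0 and x ∈ ℝ. Then lim_{t→∞} (t^{3/2} / ((3/(2√2)) log t)) · Ψ_g(r,t, √2 t + x) = C_r e^{−√2 x}. -/

import Mathlib

/-!
Substituting `√2 t + x` pulls out the factor `e^{-√2 x}` and leaves the integrand
`g(y) e^{√2 y} e^{-(x-y)²/(2(t-r))} (1 - e^{-a_t y})` with `a_t = 2(x + c log t)/(t - r) → 0⁺`,
`c = 3/(2√2)`. Writing `(1 - e^{-a y})/a = y · (1 - e^{-a y})/(a y)`, the second factor lies in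
`[0, 1]` and tends to `1`, so dominated convergence with the dominant `g(y) y e^{√2 y}` gives
`a_t⁻¹ ∫ … → ∫ g(y) y e^{√2 y} dy`, while `t^{3/2}/(c log t) · a_t/√(2π(t-r)) → √(2/π)`.
-/

open MeasureTheory Set Filter Topology

/-- The centering term m(t) = √2 t − (3/(2√2)) log t. -/
noncomputable def mFun (t : ℝ) : ℝ :=
  Real.sqrt 2 * t - 3 / (2 * Real.sqrt 2) * Real.log t

/-- The quantity Ψ_g(r,t,x) built from a measurable g : [0,∞) → [0,∞). -/
noncomputable def PsiG (g : ℝ → ℝ) (r t x : ℝ) : ℝ :=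
  Real.exp (-(Real.sqrt 2 * (x - Real.sqrt 2 * t))) / Real.sqrt (2 * Real.pi * (t - r)) *
    ∫ y in Ioi (0 : ℝ),
      g y * Real.exp (Real.sqrt 2 * y) *
        Real.exp (-(x - Real.sqrt 2 * t - y) ^ 2 / (2 * (t - r))) *
        (1 - Real.exp (-(2 * (x - mFun t) * y) / (t - r)))

open Real

lemma tendsto_one_sub_exp_neg_div :
    Tendsto (fun u : ℝ => (1 - exp (-u)) / u) (𝓝[≠] 0) (𝓝 1) := by
  have hd : HasDerivAt (fun u : ℝ => 1 - exp (-u)) 1 0 := by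
    simpa using ((hasDerivAt_neg (0 : ℝ)).exp).const_sub 1
  refine (hasDerivAt_iff_tendsto_slope.mp hd).congr fun u => ?_
  simp [slope_def_field]

lemma abs_one_sub_exp_neg_div_le_one {u : ℝ} (hu : 0 ≤ u) : |(1 - exp (-u)) / u| ≤ 1 := by
  rcases hu.eq_or_lt with rfl | hu
  · simp
  have h_nonneg : 0 ≤ 1 - exp (-u) := sub_nonneg.mpr (exp_le_one_iff.mpr (by linarith))
  have h_le : 1 - exp (-u) ≤ u := by linarith [add_one_le_exp (-u)]
  rwa [abs_of_nonneg (div_nonneg h_nonneg hu.le), div_le_one hu]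

theorem tendsto_integral_mul_of_tendsto_one {β ι : Type*} [MeasurableSpace β] {μ : Measure β}
    {l : Filter ι} [l.IsCountablyGenerated] {h : β → ℝ} (hh : Integrable h μ)
    {k : ι → β → ℝ} (hk_meas : ∀ᶠ t in l, AEStronglyMeasurable (k t) μ)
    (hk_le : ∀ᶠ t in l, ∀ᵐ y ∂μ, |k t y| ≤ 1)
    (hk_lim : ∀ᵐ y ∂μ, Tendsto (fun t => k t y) l (𝓝 1)) :
    Tendsto (fun t => ∫ y, h y * k t y ∂μ) l (𝓝 (∫ y, h y ∂μ)) := by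
  have hF_meas : ∀ᶠ t in l, AEStronglyMeasurable (fun y => h y * k t y) μ := by
    filter_upwards [hk_meas] with t ht using hh.aestronglyMeasurable.mul ht
  have h_bound : ∀ᶠ t in l, ∀ᵐ y ∂μ, ‖h y * k t y‖ ≤ ‖h y‖ := by
    filter_upwards [hk_le] with t ht
    filter_upwards [ht] with y hy
    rw [norm_mul, Real.norm_eq_abs (k t y)]
    exact mul_le_of_le_one_right (norm_nonneg _) hy
  have h_lim : ∀ᵐ y ∂μ, Tendsto (fun t => h y * k t y) l (𝓝 (h y)) := by
    filter_upwards [hk_lim] with y hy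
    simpa using hy.const_mul (h y)
  exact tendsto_integral_filter_of_dominated_convergence _ hF_meas h_bound hh.norm h_lim

theorem tendsto_setIntegral_one_sub_exp_neg_mul_div {ι : Type*} {l : Filter ι}
    [l.IsCountablyGenerated] {f : ℝ → ℝ} (hf : IntegrableOn (fun y => f y * y) (Ioi 0))
    {w : ι → ℝ → ℝ} (hw_meas : ∀ t, Measurable (w t)) (hw_le : ∀ᶠ t in l, ∀ y, |w t y| ≤ 1)
    (hw_lim : ∀ y, Tendsto (fun t => w t y) l (𝓝 1)) {a : ι → ℝ} (ha : Tendsto a l (𝓝[>] 0)) :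
    Tendsto (fun t => (∫ y in Ioi 0, f y * w t y * (1 - exp (-(a t * y)))) / a t) l
      (𝓝 (∫ y in Ioi 0, f y * y)) := by
  obtain ⟨ha_zero, ha_pos⟩ := tendsto_nhdsWithin_iff.mp ha
  set k : ι → ℝ → ℝ := fun t y => w t y * ((1 - exp (-(a t * y))) / (a t * y))
  have hk_meas : ∀ t, AEStronglyMeasurable (k t) (volume.restrict (Ioi 0)) := fun t =>
    ((hw_meas t).mul (by fun_prop)).aestronglyMeasurable
  have hk_le : ∀ᶠ t in l, ∀ᵐ y ∂(volume.restrict (Ioi 0)), |k t y| ≤ 1 := by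
    filter_upwards [hw_le, ha_pos] with t hwt hat
    refine (ae_restrict_iff' measurableSet_Ioi).mpr (ae_of_all _ fun y (hy : 0 < y) => ?_)
    rw [abs_mul]
    exact mul_le_one₀ (hwt y) (abs_nonneg _)
      (abs_one_sub_exp_neg_div_le_one (mul_pos hat hy).le)
  have hk_lim : ∀ᵐ y ∂(volume.restrict (Ioi 0)), Tendsto (fun t => k t y) l (𝓝 1) := by
    refine (ae_restrict_iff' measurableSet_Ioi).mpr (ae_of_all _ fun y (hy : 0 < y) => ?_)
    have hay : Tendsto (fun t => a t * y) l (𝓝[≠] 0) := by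
      refine tendsto_nhdsWithin_iff.mpr ⟨by simpa using ha_zero.mul_const y, ?_⟩
      filter_upwards [ha_pos] with t hat using (mul_pos hat hy).ne'
    simpa using (hw_lim y).mul (tendsto_one_sub_exp_neg_div.comp hay)
  refine (tendsto_integral_mul_of_tendsto_one hf (.of_forall hk_meas) hk_le hk_lim).congr' ?_
  filter_upwards [ha_pos] with t hat
  rw [← integral_div]
  refine setIntegral_congr_fun measurableSet_Ioi fun y (hy : 0 < y) => ?_
  have : a t * y ≠ 0 := (mul_pos hat hy).ne'
  simp only [k]
  field_simp

lemma tendsto_div_sub_const_atTop (r : ℝ) : Tendsto (fun t : ℝ => t / (t - r)) atTop (𝓝 1) := by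
  have h_sub : Tendsto (fun t : ℝ => t - r) atTop atTop :=
    tendsto_atTop_add_const_right _ _ tendsto_id
  have h : Tendsto (fun t : ℝ => 1 + r / (t - r)) atTop (𝓝 (1 + 0)) :=
    tendsto_const_nhds.add (tendsto_const_nhds.div_atTop h_sub)
  refine (by simpa using h : Tendsto _ _ _).congr' ?_
  filter_upwards [eventually_gt_atTop r] with t ht
  have : t - r ≠ 0 := sub_ne_zero.mpr ht.ne'
  field_simp
  ring

lemma tendsto_add_div_self_of_tendsto_atTop {α : Type*} {l : Filter α} {L : α → ℝ}
    (hL : Tendsto L l atTop) (x : ℝ) : Tendsto (fun t => (x + L t) / L t) l (𝓝 1) := by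
  have h : Tendsto (fun t => x / L t + 1) l (𝓝 (0 + 1)) :=
    (tendsto_const_nhds.div_atTop hL).add tendsto_const_nhds
  refine (by simpa using h : Tendsto _ _ _).congr' ?_
  filter_upwards [hL.eventually_gt_atTop 0] with t ht
  rw [div_add_one ht.ne']

lemma tendsto_add_mul_log_div_sub_nhdsGT {c : ℝ} (hc : 0 < c) (r x : ℝ) :
    Tendsto (fun t : ℝ => 2 * (x + c * log t) / (t - r)) atTop (𝓝[>] 0) := by
  have h_log : Tendsto (fun t : ℝ => x + c * log t) atTop atTop :=
    tendsto_atTop_add_const_left _ x (tendsto_log_atTop.const_mul_atTop hc)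
  have h_log_div : Tendsto (fun t : ℝ => log t / t) atTop (𝓝 0) := by
    simpa using isLittleO_log_id_atTop.tendsto_div_nhds_zero
  have h_div : Tendsto (fun t : ℝ => 2 * (x / t + c * (log t / t)) * (t / (t - r))) atTop
      (𝓝 (2 * (0 + c * 0) * 1)) :=
    (((tendsto_const_nhds.div_atTop tendsto_id).add (h_log_div.const_mul c)).const_mul 2).mul
      (tendsto_div_sub_const_atTop r)
  refine tendsto_nhdsWithin_iff.mpr ⟨(by simpa using h_div : Tendsto _ _ _).congr' ?_, ?_⟩
  · filter_upwards [eventually_gt_atTop r, eventually_gt_atTop 0] with t htr ht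
    have : t - r ≠ 0 := sub_ne_zero.mpr htr.ne'
    field_simp
  · filter_upwards [h_log.eventually_gt_atTop 0, eventually_gt_atTop r] with t hx htr
    exact div_pos (by linarith) (sub_pos.mpr htr)

lemma tendsto_rpow_div_log_div_sqrt_mul {c : ℝ} (hc : 0 < c) (r x : ℝ) :
    Tendsto (fun t : ℝ => t ^ ((3 : ℝ) / 2) / (c * log t) / √(2 * π * (t - r)) *
      (2 * (x + c * log t) / (t - r))) atTop (𝓝 √(2 / π)) := by
  have h_log : Tendsto (fun t : ℝ => c * log t) atTop atTop :=
    tendsto_log_atTop.const_mul_atTop hc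
  have h_pow : Tendsto (fun t : ℝ => (t / (t - r)) ^ ((3 : ℝ) / 2)) atTop (𝓝 1) := by
    simpa using (tendsto_div_sub_const_atTop r).rpow_const (Or.inl one_ne_zero) (p := 3 / 2)
  have h := (h_pow.mul (tendsto_add_div_self_of_tendsto_atTop h_log x)).const_mul √(2 / π)
  refine (by simpa using h : Tendsto _ _ _).congr' ?_
  filter_upwards [eventually_gt_atTop r, eventually_gt_atTop 1] with t htr ht
  have htr : 0 < t - r := sub_pos.mpr htr
  have hlog : 0 < log t := log_pos ht
  have h_sqrt : √2 * √(2 * (t - r) * π) = √π * 2 * √(t - r) := by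
    rw [sqrt_mul (by positivity), sqrt_mul zero_le_two]
    linear_combination (√(t - r) * √π) * mul_self_sqrt zero_le_two
  have h_rpow : (t / (t - r)) ^ ((3 : ℝ) / 2) = t ^ ((3 : ℝ) / 2) / ((t - r) * √(t - r)) := by
    rw [div_rpow (by linarith) htr.le, show ((3 : ℝ) / 2) = 1 + 1 / 2 by norm_num,
      rpow_add htr, rpow_one, ← sqrt_eq_rpow]
  rw [h_rpow]
  field_simp
  linear_combination (x + c * log t) * h_sqrt

lemma abs_exp_neg_sq_div_le_one (z : ℝ) {s : ℝ} (hs : 0 ≤ s) : |exp (-z ^ 2 / s)| ≤ 1 := by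
  rw [abs_of_pos (exp_pos _), exp_le_one_iff]
  exact div_nonpos_of_nonpos_of_nonneg (neg_nonpos.mpr (sq_nonneg z)) hs

lemma PsiG_sqrt_two_mul_add (g : ℝ → ℝ) (r t x : ℝ) :
    PsiG g r t (√2 * t + x) = exp (-(√2 * x)) / √(2 * π * (t - r)) *
      ∫ y in Ioi 0, g y * exp (√2 * y) * exp (-(x - y) ^ 2 / (2 * (t - r))) *
        (1 - exp (-(2 * (x + 3 / (2 * √2) * log t) / (t - r) * y))) := by
  simp only [PsiG, mFun, add_sub_cancel_left, add_sub_sub_cancel]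
  congr 4 with y
  ring_nf

theorem psiG_asymptotics_line_general
    (g : ℝ → ℝ)
    (hint : IntegrableOn (fun y => g y * (y * Real.exp (Real.sqrt 2 * y))) (Ioi 0))
    (r : ℝ) (x : ℝ) :
    Tendsto (fun t : ℝ => t ^ ((3 : ℝ) / 2) / (3 / (2 * Real.sqrt 2) * Real.log t) *
        PsiG g r t (Real.sqrt 2 * t + x)) atTop
      (𝓝 (Real.sqrt (2 / Real.pi) *
          (∫ y in Ioi (0 : ℝ), g y * (y * Real.exp (Real.sqrt 2 * y))) *
        Real.exp (-(Real.sqrt 2 * x)))) := by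
  set c : ℝ := 3 / (2 * √2)
  have hc : 0 < c := by positivity
  have h_integrand : (fun y => g y * exp (√2 * y) * y) = fun y => g y * (y * exp (√2 * y)) := by
    ext y
    ring
  have h_var : Tendsto (fun t : ℝ => 2 * (t - r)) atTop atTop :=
    (tendsto_atTop_add_const_right _ _ tendsto_id).const_mul_atTop two_pos
  have h_gauss_le : ∀ᶠ t in atTop, ∀ y : ℝ, |exp (-(x - y) ^ 2 / (2 * (t - r)))| ≤ 1 := by
    filter_upwards [h_var.eventually_ge_atTop 0] with t ht y
    exact abs_exp_neg_sq_div_le_one (x - y) ht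
  have h_gauss_lim (y : ℝ) : Tendsto (fun t => exp (-(x - y) ^ 2 / (2 * (t - r)))) atTop (𝓝 1) :=
    tendsto_exp_nhds_zero_nhds_one.comp (tendsto_const_nhds.div_atTop h_var)
  have ha := tendsto_add_mul_log_div_sub_nhdsGT hc r x
  have h_int := tendsto_setIntegral_one_sub_exp_neg_mul_div (h_integrand ▸ hint) (by fun_prop)
    h_gauss_le h_gauss_lim ha
  have h_lim := ((tendsto_rpow_div_log_div_sqrt_mul hc r x).mul h_int).const_mul (exp (-(√2 * x)))
  have h_value : exp (-(√2 * x)) * (√(2 / π) * ∫ y in Ioi 0, g y * exp (√2 * y) * y) =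
      √(2 / π) * (∫ y in Ioi 0, g y * (y * exp (√2 * y))) * exp (-(√2 * x)) := by
    rw [h_integrand]
    ring
  rw [← h_value]
  refine h_lim.congr' ?_
  filter_upwards [(tendsto_nhdsWithin_iff.mp ha).2] with t hat
  rw [PsiG_sqrt_two_mul_add, mul_assoc _ (2 * _ / _), mul_div_cancel₀ _ hat.out.ne']
  ring

/-- Asymptotics of Ψ along the line √2 t:
lim_{t→∞} (t^{3/2} / ((3/(2√2)) log t)) Ψ_g(r,t,√2 t + x) = C_r e^{−√2 x},
where C_r = √(2/π) ∫₀^∞ g(y) y e^{√2 y} dy < ∞. -/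
theorem psiG_asymptotics_line
    (g : ℝ → ℝ) (hmeas : Measurable g) (hpos : ∀ y : ℝ, 0 ≤ y → 0 ≤ g y)
    (hint : IntegrableOn (fun y => g y * (y * Real.exp (Real.sqrt 2 * y))) (Ioi 0))
    (r : ℝ) (hr : 0 < r) (x : ℝ) :
    Tendsto (fun t : ℝ => t ^ ((3 : ℝ) / 2) / (3 / (2 * Real.sqrt 2) * Real.log t) *
        PsiG g r t (Real.sqrt 2 * t + x)) atTop
      (𝓝 (Real.sqrt (2 / Real.pi) *
          (∫ y in Ioi (0 : ℝ), g y * (y * Real.exp (Real.sqrt 2 * y))) *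
        Real.exp (-(Real.sqrt 2 * x)))) :=
  psiG_asymptotics_line_general g hint r x
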